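/- arXiv:1709.03142 — 2 statements merged into one kernel-verified Lean document; each statement's English description precedes it below -/
import Mathlib

section
/- Let 0<α<1 and ω_n = ((n+1)^α − n^α)/Γ(α+1) for n = 0,1,2,…. Then ω_n > 0 for all n, Σ_{n=0}^∞ ω_n = ∞, and ω_{n+1}/ω_n > ω_n/ω_{n−1} for all n ≥ 1. -/
/-!
The weight `ω_n` is `∫_n^{n+1} t^{α-1} dt / Γ(α)`. Since `t (t + 2) < (t + 1)^2` and
`α - 1 < 0`, we have `(t + 1)^{α-1} < t^{(α-1)/2} (t + 2)^{(α-1)/2}`; integrating over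
`[n, n + 1]` and applying Cauchy–Schwarz gives `ω_{n+1}^2 < ω_n ω_{n+2}`.
The partial sums telescope to `N^α / Γ(α + 1)`.
-/

open Real

/-- Midpoint quadrature weights `ω_m = ((m+1)^α − m^α)/Γ(α+1)`. -/
noncomputable def omegaW (α : ℝ) (m : ℕ) : ℝ :=
  (((m : ℝ) + 1) ^ α - (m : ℝ) ^ α) / Real.Gamma (α + 1)

open MeasureTheory Set

theorem sq_integral_mul_le_of_nonneg {X : Type*} [MeasurableSpace X] {μ : Measure X}
    {f g : X → ℝ} (hf₀ : 0 ≤ᵐ[μ] f) (hg₀ : 0 ≤ᵐ[μ] g) (hf : MemLp f 2 μ) (hg : MemLp g 2 μ) :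
    (∫ a, f a * g a ∂μ) ^ 2 ≤ (∫ a, f a ^ 2 ∂μ) * ∫ a, g a ^ 2 ∂μ := by
  have hholder := integral_mul_le_Lp_mul_Lq_of_nonneg Real.HolderConjugate.two_two hf₀ hg₀
    (by simpa using hf) (by simpa using hg)
  simp only [rpow_two, one_div] at hholder
  have hA : 0 ≤ ∫ a, f a ^ 2 ∂μ := integral_nonneg fun a => sq_nonneg _
  have hB : 0 ≤ ∫ a, g a ^ 2 ∂μ := integral_nonneg fun a => sq_nonneg _
  calc (∫ a, f a * g a ∂μ) ^ 2
      ≤ ((∫ a, f a ^ 2 ∂μ) ^ (2⁻¹ : ℝ) * (∫ a, g a ^ 2 ∂μ) ^ (2⁻¹ : ℝ)) ^ 2 :=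
        pow_le_pow_left₀ (integral_nonneg_of_ae (by
          filter_upwards [hf₀, hg₀] with a ha hb using mul_nonneg ha hb)) hholder 2
    _ = (∫ a, f a ^ 2 ∂μ) * ∫ a, g a ^ 2 ∂μ := by
        rw [mul_pow, ← rpow_natCast, ← rpow_natCast (_ ^ _), ← rpow_mul hA, ← rpow_mul hB]
        norm_num

theorem rpow_two_mul_lt_mul_rpow {t p : ℝ} (ht : 0 < t) (hp : p < 0) :
    (t + 1) ^ (2 * p) < t ^ p * (t + 2) ^ p := by
  rw [← mul_rpow ht.le (by linarith : (0 : ℝ) ≤ t + 2), rpow_mul (by linarith), rpow_two]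
  exact rpow_lt_rpow_of_neg (by positivity) (by nlinarith) hp

theorem integral_add_rpow_sub_one {α : ℝ} (hα : 0 < α) (a b c : ℝ) :
    ∫ t in a..b, (t + c) ^ (α - 1) = ((b + c) ^ α - (a + c) ^ α) / α := by
  rw [intervalIntegral.integral_comp_add_right (fun t => t ^ (α - 1)),
    integral_rpow (Or.inl (by linarith)), sub_add_cancel]

theorem intervalIntegrable_add_rpow {r : ℝ} (hr : -1 < r) (a b c : ℝ) :
    IntervalIntegrable (fun t => (t + c) ^ r) volume a b :=
  IntervalIntegrable.comp_add_right_iff (f := fun t : ℝ => t ^ r) |>.2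
    (intervalIntegral.intervalIntegrable_rpow' hr)

theorem sq_add_rpow_ae_eq {p a b c : ℝ} (hac : 0 ≤ a + c) :
    (fun t => ((t + c) ^ p) ^ 2) =ᵐ[volume.restrict (Ioc a b)] fun t => (t + c) ^ (2 * p) := by
  filter_upwards [ae_restrict_mem measurableSet_Ioc] with t ht
  rw [← rpow_natCast, ← rpow_mul (by linarith [ht.1]), Nat.cast_ofNat, mul_comm]

theorem memLp_two_add_rpow {p a b c : ℝ} (hp : -1 < 2 * p) (hac : 0 ≤ a + c) :
    MemLp (fun t => (t + c) ^ p) 2 (volume.restrict (Ioc a b)) :=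
  (memLp_two_iff_integrable_sq
      (by fun_prop : Measurable fun t : ℝ => (t + c) ^ p).aestronglyMeasurable).2
    ((intervalIntegrable_add_rpow hp a b c).1.congr (sq_add_rpow_ae_eq hac).symm)

theorem sq_integral_add_one_rpow_lt {p a b : ℝ} (hp1 : -1 < 2 * p) (hp : p < 0) (ha : 0 ≤ a)
    (hab : a < b) :
    (∫ t in a..b, (t + 1) ^ (2 * p)) ^ 2 <
      (∫ t in a..b, t ^ (2 * p)) * ∫ t in a..b, (t + 2) ^ (2 * p) := by
  set μ := volume.restrict (Ioc a b)
  have hpos : ∀ᵐ t ∂μ, 0 < t := by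
    filter_upwards [ae_restrict_mem measurableSet_Ioc] with t ht using ha.trans_lt ht.1
  have hsq : ∀ c : ℝ, 0 ≤ c →
      ∫ t, ((t + c) ^ p) ^ 2 ∂μ = ∫ t in a..b, (t + c) ^ (2 * p) := by
    intro c hc
    rw [intervalIntegral.integral_of_le hab.le]
    exact integral_congr_ae (sq_add_rpow_ae_eq (by linarith))
  have hf : MemLp (fun t => (t + 0) ^ p) 2 μ := memLp_two_add_rpow hp1 (by linarith)
  have hg : MemLp (fun t => (t + 2) ^ p) 2 μ := memLp_two_add_rpow hp1 (by linarith)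
  have hlt : ∀ t : ℝ, 0 < t → (t + 1) ^ (2 * p) < (t + 0) ^ p * (t + 2) ^ p := fun t ht => by
    simpa using rpow_two_mul_lt_mul_rpow ht hp
  have hstrict : ∫ t in a..b, (t + 1) ^ (2 * p) < ∫ t, (t + 0) ^ p * (t + 2) ^ p ∂μ := by
    rw [← intervalIntegral.integral_of_le hab.le]
    refine intervalIntegral.integral_lt_integral_of_ae_le_of_measure_setOfPred_lt_ne_zero
      hab.le (intervalIntegrable_add_rpow hp1 a b 1)
      ((intervalIntegrable_iff_integrableOn_Ioc_of_le hab.le).2 (hf.integrable_mul hg))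
      (hpos.mono fun t ht => (hlt t ht).le) ?_
    have : NeZero μ := ⟨by simp [μ, hab]⟩
    exact frequently_ae_iff.1 (hpos.mono hlt).frequently
  have hnonneg : ∀ c : ℝ, 0 ≤ c → 0 ≤ᵐ[μ] fun t => (t + c) ^ p := fun c hc =>
    hpos.mono fun t ht => rpow_nonneg (by linarith) _
  have hCS := sq_integral_mul_le_of_nonneg (hnonneg 0 le_rfl) (hnonneg 2 zero_le_two) hf hg
  rw [hsq 0 le_rfl, hsq 2 zero_le_two] at hCS
  simp only [add_zero] at hCS hstrict
  refine (pow_lt_pow_left₀ hstrict ?_ two_ne_zero).trans_le hCS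
  exact intervalIntegral.integral_nonneg hab.le fun t ht => rpow_nonneg (by linarith [ht.1]) _

theorem sq_sub_rpow_lt_mul {α x : ℝ} (hα0 : 0 < α) (hα1 : α < 1) (hx : 0 ≤ x) :
    ((x + 2) ^ α - (x + 1) ^ α) ^ 2 < ((x + 1) ^ α - x ^ α) * ((x + 3) ^ α - (x + 2) ^ α) := by
  have key := sq_integral_add_one_rpow_lt (p := (α - 1) / 2) (by linarith) (by linarith) hx
    (lt_add_one x)
  have hI : ∀ c, ∫ t in x..x + 1, (t + c) ^ (2 * ((α - 1) / 2)) =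
      ((x + 1 + c) ^ α - (x + c) ^ α) / α := fun c => by
    rw [mul_div_cancel₀ _ two_ne_zero, integral_add_rpow_sub_one hα0]
  have hI0 := hI 0
  simp only [add_zero] at hI0
  rw [hI, hI, hI0, div_pow, div_mul_div_comm, ← sq,
    div_lt_div_iff_of_pos_right (by positivity)] at key
  norm_num [add_assoc] at key
  exact key

theorem omegaW_pos {α : ℝ} (hα : 0 < α) (n : ℕ) : 0 < omegaW α n :=
  div_pos (sub_pos.2 (rpow_lt_rpow n.cast_nonneg (lt_add_one _) hα))
    (Gamma_pos_of_pos (by linarith))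

theorem sum_range_omegaW {α : ℝ} (hα : 0 < α) (N : ℕ) :
    ∑ i ∈ Finset.range N, omegaW α i = (N : ℝ) ^ α / Gamma (α + 1) := by
  simp only [omegaW, ← Finset.sum_div]
  have htelescope := Finset.sum_range_sub (fun k : ℕ => (k : ℝ) ^ α) N
  push_cast at htelescope
  simp [htelescope, zero_rpow hα.ne']

theorem not_summable_omegaW {α : ℝ} (hα : 0 < α) : ¬Summable (omegaW α) := by
  rw [summable_iff_not_tendsto_nat_atTop_of_nonneg fun n => (omegaW_pos hα n).le, not_not,
    funext (sum_range_omegaW hα)]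
  exact ((tendsto_rpow_atTop hα).comp tendsto_natCast_atTop_atTop).atTop_div_const
    (Gamma_pos_of_pos (by linarith))

theorem sq_omegaW_lt_mul {α : ℝ} (hα0 : 0 < α) (hα1 : α < 1) (m : ℕ) :
    omegaW α (m + 1) ^ 2 < omegaW α m * omegaW α (m + 2) := by
  have key := sq_sub_rpow_lt_mul hα0 hα1 m.cast_nonneg
  simp only [omegaW, div_pow, div_mul_div_comm, ← sq]
  rw [div_lt_div_iff_of_pos_right (by positivity)]
  push_cast
  rwa [show (m : ℝ) + 1 + 1 = m + 2 by ring, show (m : ℝ) + 2 + 1 = m + 3 by ring]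

theorem omegaW_div_lt_div {α : ℝ} (hα0 : 0 < α) (hα1 : α < 1) (m : ℕ) :
    omegaW α (m + 1) / omegaW α m < omegaW α (m + 2) / omegaW α (m + 1) := by
  rw [div_lt_div_iff₀ (omegaW_pos hα0 m) (omegaW_pos hα0 (m + 1)), ← sq, mul_comm]
  exact sq_omegaW_lt_mul hα0 hα1 m

theorem stmt_17 (α : ℝ) (hα0 : 0 < α) (hα1 : α < 1) :
    (∀ n : ℕ, 0 < omegaW α n) ∧
    ¬ Summable (fun n : ℕ => omegaW α n) ∧
    ∀ n : ℕ, 1 ≤ n → omegaW α n / omegaW α (n - 1) < omegaW α (n + 1) / omegaW α n := by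
  refine ⟨omegaW_pos hα0, not_summable_omegaW hα0, fun n hn => ?_⟩
  obtain ⟨m, rfl⟩ := Nat.exists_eq_add_of_le' hn
  simpa using omegaW_div_lt_div hα0 hα1 m
end

section
/- Let 0<α<1 and ω_n = ((n+1)^α − n^α)/Γ(α+1) for n = 0,1,2,…. Then for every complex number ξ with |ξ| < 1, |Σ_{n=0}^∞ ω_n ξ^n| ≥ 1/(2Γ(α+1)). -/
/-!
Write `ξ = r z` with `r = ‖ξ‖ < 1` and `‖z‖ = 1`, and put `c n = ω n * r ^ n`. Concavity of
`t ^ α` and convexity of `t ↦ (t + 1) ^ α - t ^ α` make `c` nonnegative, decreasing and convex,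
and `(n + 1) * c n → 0`. Summing `∑ c n * Re (z ^ n)` by parts twice turns it into a nonnegative
combination of the Fejér sums `∑_{k ≤ n} Re (1 + z + ⋯ + z ^ k)`, plus a vanishing boundary term.
Fejér's identity bounds these sums below by `(n + 1) / 2`, which are the Fejér sums of `δ₀ / 2`;
so the real part of the series is at least `c 0 / 2 = 1 / (2 Γ(α + 1))`.
-/

open Real

open Finset Filter Topology ComplexConjugate

namespace Complex

lemma conj_geom_sum_mul_pow {z : ℂ} (hz : ‖z‖ = 1) (n : ℕ) :
    conj (∑ j ∈ range n, z ^ j) * z ^ n = z * ∑ j ∈ range n, z ^ j := by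
  have hzm (m : ℕ) : conj (z ^ m) * z ^ m = 1 := by rw [conj_mul', norm_pow, hz]; simp
  induction n with
  | zero => simp
  | succ n ih =>
    rw [sum_range_succ, map_add, add_mul, pow_succ, ← mul_assoc, ← mul_assoc, ih, hzm,
      ← sum_range_succ (z ^ ·), geom_sum_succ]
    ring

lemma two_mul_sum_re_geom_sum {z : ℂ} (hz : ‖z‖ = 1) (n : ℕ) :
    2 * ∑ k ∈ range n, (∑ j ∈ range (k + 1), z ^ j).re
      = n + normSq (∑ j ∈ range n, z ^ j) := by
  induction n with
  | zero => simp
  | succ n ih =>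
    have hzn : normSq (z ^ n) = 1 := by simp [normSq_eq_norm_sq, hz]
    have hcross : ((∑ j ∈ range n, z ^ j) * conj (z ^ n)).re
        = (∑ j ∈ range (n + 1), z ^ j).re - 1 := by
      rw [← conj_re, map_mul, conj_conj, conj_geom_sum_mul_pow hz, geom_sum_succ, add_re, one_re,
        add_sub_cancel_right]
    rw [sum_range_succ, mul_add, ih, sum_range_succ _ n, normSq_add, hzn, hcross,
      sum_range_succ _ n]
    push_cast
    ring

lemma half_succ_le_sum_sum_re_pow {z : ℂ} (hz : ‖z‖ = 1) (n : ℕ) :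
    ((n : ℝ) + 1) / 2 ≤ ∑ k ∈ range (n + 1), ∑ j ∈ range (k + 1), (z ^ j).re := by
  have h := two_mul_sum_re_geom_sum hz (n + 1)
  simp only [re_sum] at h
  push_cast at h
  linarith [normSq_nonneg (∑ j ∈ range (n + 1), z ^ j)]

end Complex

lemma sum_range_mul_eq_by_parts_twice (c p : ℕ → ℝ) (N : ℕ) :
    ∑ n ∈ range (N + 2), c n * p n =
      ∑ n ∈ range N, (c n - 2 * c (n + 1) + c (n + 2)) *
          ∑ k ∈ range (n + 1), ∑ j ∈ range (k + 1), p j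
        + (c N - c (N + 1)) * ∑ k ∈ range (N + 1), ∑ j ∈ range (k + 1), p j
        + c (N + 1) * ∑ j ∈ range (N + 2), p j := by
  induction N with
  | zero => simp [sum_range_succ]; ring
  | succ N ih =>
    rw [sum_range_succ, ih]
    simp only [sum_range_succ _ (N + 1), sum_range_succ _ N, sum_range_succ _ (N + 2)]
    ring

/-- The case `p = δ₀` of `sum_range_mul_eq_by_parts_twice`. -/
lemma sum_range_second_diff_mul_succ (c : ℕ → ℝ) (N : ℕ) :
    ∑ n ∈ range N, (c n - 2 * c (n + 1) + c (n + 2)) * ((n : ℝ) + 1)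
      + (c N - c (N + 1)) * ((N : ℝ) + 1) = c 0 - c (N + 1) := by
  have h := sum_range_mul_eq_by_parts_twice c (fun n => if n = 0 then 1 else 0) N
  simp [sum_ite_eq'] at h
  linarith

section ConvexSequence

variable {c : ℕ → ℝ} (hc : ∀ n, 0 ≤ c n) (hanti : Antitone c)
  (hconv : ∀ n, 2 * c (n + 1) ≤ c n + c (n + 2))
include hc hanti hconv

/-- Summing by parts twice writes `∑ c n * p n` as a nonnegative combination of the iterated
partial sums of `p`; comparing with the same expansion for `δ₀ / 2`
(`sum_range_second_diff_mul_succ`) leaves only a boundary term. -/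
lemma half_le_sum_range_mul {p : ℕ → ℝ} (hp : ∀ n, |p n| ≤ 1)
    (hcesaro : ∀ n : ℕ, ((n : ℝ) + 1) / 2 ≤ ∑ k ∈ range (n + 1), ∑ j ∈ range (k + 1), p j)
    (N : ℕ) :
    c 0 / 2 ≤ ∑ n ∈ range (N + 2), c n * p n + 2 * ((((N + 1 : ℕ) : ℝ) + 1) * c (N + 1)) := by
  have hsecond : ∑ n ∈ range N, (c n - 2 * c (n + 1) + c (n + 2)) * (((n : ℝ) + 1) / 2)
      ≤ ∑ n ∈ range N, (c n - 2 * c (n + 1) + c (n + 2)) *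
          ∑ k ∈ range (n + 1), ∑ j ∈ range (k + 1), p j :=
    sum_le_sum fun n _ => mul_le_mul_of_nonneg_left (hcesaro n) (by linarith [hconv n])
  have hfirst : (c N - c (N + 1)) * (((N : ℝ) + 1) / 2)
      ≤ (c N - c (N + 1)) * ∑ k ∈ range (N + 1), ∑ j ∈ range (k + 1), p j :=
    mul_le_mul_of_nonneg_left (hcesaro N) (sub_nonneg.2 (hanti N.le_succ))
  have hpartial : -((N : ℝ) + 2) ≤ ∑ j ∈ range (N + 2), p j := by
    have := (abs_sum_le_sum_abs p (range (N + 2))).trans (sum_le_sum fun j _ => hp j)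
    simp only [sum_const, card_range, nsmul_eq_mul, mul_one] at this
    push_cast at this
    linarith [neg_abs_le (∑ j ∈ range (N + 2), p j)]
  have hboundary : -(((N : ℝ) + 2) * c (N + 1)) ≤ c (N + 1) * ∑ j ∈ range (N + 2), p j := by
    linarith [mul_le_mul_of_nonneg_left hpartial (hc (N + 1))]
  have htelescope := sum_range_second_diff_mul_succ c N
  rw [sum_range_mul_eq_by_parts_twice]
  simp only [← sum_div, mul_div_assoc'] at hsecond hfirst
  push_cast
  linarith [hc (N + 1), mul_nonneg N.cast_nonneg (hc (N + 1))]

theorem half_le_of_hasSum_mul {p : ℕ → ℝ} {s : ℝ} (hs : HasSum (fun n => c n * p n) s)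
    (hlim : Tendsto (fun n : ℕ => ((n : ℝ) + 1) * c n) atTop (𝓝 0)) (hp : ∀ n, |p n| ≤ 1)
    (hcesaro : ∀ n : ℕ, ((n : ℝ) + 1) / 2 ≤ ∑ k ∈ range (n + 1), ∑ j ∈ range (k + 1), p j) :
    c 0 / 2 ≤ s := by
  have hbound : Tendsto (fun N => ∑ n ∈ range (N + 2), c n * p n
      + 2 * ((((N + 1 : ℕ) : ℝ) + 1) * c (N + 1))) atTop (𝓝 (s + 2 * 0)) :=
    (hs.tendsto_sum_nat.comp (tendsto_add_atTop_nat 2)).add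
      ((hlim.comp (tendsto_add_atTop_nat 1)).const_mul 2)
  rw [mul_zero, add_zero] at hbound
  exact ge_of_tendsto' hbound (half_le_sum_range_mul hc hanti hconv hp hcesaro)

theorem half_le_re_of_hasSum_mul_pow
    (hlim : Tendsto (fun n : ℕ => ((n : ℝ) + 1) * c n) atTop (𝓝 0)) {z : ℂ} (hz : ‖z‖ = 1)
    {s : ℂ} (hs : HasSum (fun n => (c n : ℂ) * z ^ n) s) : c 0 / 2 ≤ s.re := by
  refine half_le_of_hasSum_mul hc hanti hconv ?_ hlim (p := fun n => (z ^ n).re)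
    (fun n => ?_) (Complex.half_succ_le_sum_sum_re_pow hz)
  · simpa only [Complex.re_ofReal_mul] using Complex.hasSum_re hs
  · simpa [hz] using Complex.abs_re_le_norm (z ^ n)

end ConvexSequence

lemma ConvexOn.two_mul_le_add {s : Set ℝ} {g : ℝ → ℝ} (hg : ConvexOn ℝ s g) {x : ℝ}
    (hx : x ∈ s) (hx2 : x + 2 ∈ s) : 2 * g (x + 1) ≤ g x + g (x + 2) := by
  have h := hg.2 hx hx2 (by norm_num : (0 : ℝ) ≤ 1 / 2) (by norm_num : (0 : ℝ) ≤ 1 / 2)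
    (by norm_num)
  rw [smul_eq_mul, smul_eq_mul, smul_eq_mul, smul_eq_mul,
    show 1 / 2 * x + 1 / 2 * (x + 2) = x + 1 by ring] at h
  linarith

lemma hasDerivAt_rpow_add_one_sub_rpow (p : ℝ) {x : ℝ} (hx : 0 < x) :
    HasDerivAt (fun y : ℝ => (y + 1) ^ p - y ^ p) (p * ((x + 1) ^ (p - 1) - x ^ (p - 1))) x := by
  have hshift : HasDerivAt (fun y : ℝ => (y + 1) ^ p) (1 * p * (x + 1) ^ (p - 1)) x :=
    ((hasDerivAt_id' x).add_const 1).rpow_const (Or.inl (by positivity))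
  exact (hshift.sub (hasDerivAt_rpow_const (Or.inl hx.ne'))).congr_deriv (by ring)

lemma convexOn_rpow_add_one_sub_rpow {α : ℝ} (h0 : 0 ≤ α) (h1 : α ≤ 1) :
    ConvexOn ℝ (Set.Ici 0) fun x : ℝ => (x + 1) ^ α - x ^ α := by
  have hcont : Continuous fun x : ℝ => (x + 1) ^ α - x ^ α := by
    have := continuous_rpow_const h0
    fun_prop
  refine convexOn_of_hasDerivWithinAt2_nonneg (convex_Ici 0) hcont.continuousOn
    (f' := fun x => α * ((x + 1) ^ (α - 1) - x ^ (α - 1)))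
    (f'' := fun x => α * ((α - 1) * ((x + 1) ^ (α - 1 - 1) - x ^ (α - 1 - 1)))) ?_ ?_ ?_
  all_goals simp only [interior_Ici]; intro x hx
  · exact (hasDerivAt_rpow_add_one_sub_rpow α hx).hasDerivWithinAt
  · exact ((hasDerivAt_rpow_add_one_sub_rpow (α - 1) hx).const_mul α).hasDerivWithinAt
  · have hle : (x + 1) ^ (α - 1 - 1) ≤ x ^ (α - 1 - 1) :=
      rpow_le_rpow_of_nonpos hx (by linarith) (by linarith)
    exact mul_nonneg h0 (mul_nonneg_of_nonpos_of_nonpos (by linarith) (by linarith))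

section omegaW

variable {α : ℝ} (h0 : 0 ≤ α) (h1 : α ≤ 1)

include h0 in
lemma omegaW_nonneg (n : ℕ) : 0 ≤ omegaW α n :=
  div_nonneg (sub_nonneg.2 (rpow_le_rpow n.cast_nonneg (by linarith) h0))
    (Gamma_pos_of_pos (by linarith)).le

include h0 h1 in
lemma omegaW_antitone : Antitone (omegaW α) := by
  refine antitone_nat_of_succ_le fun n => div_le_div_of_nonneg_right ?_
    (Gamma_pos_of_pos (by linarith)).le
  have h := (concaveOn_rpow h0 h1).neg.two_mul_le_add (x := n) (Set.mem_Ici.2 n.cast_nonneg)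
    (by simp only [Set.mem_Ici]; positivity)
  simp only [Pi.neg_apply] at h
  push_cast
  rw [add_assoc, one_add_one_eq_two]
  linarith

include h0 h1 in
lemma two_mul_omegaW_succ_le (n : ℕ) :
    2 * omegaW α (n + 1) ≤ omegaW α n + omegaW α (n + 2) := by
  have h := (convexOn_rpow_add_one_sub_rpow h0 h1).two_mul_le_add (x := n)
    (Set.mem_Ici.2 n.cast_nonneg) (by simp only [Set.mem_Ici]; positivity)
  simp only [omegaW, ← add_div, ← mul_div_assoc]
  push_cast
  exact div_le_div_of_nonneg_right (by linarith) (Gamma_pos_of_pos (by linarith)).le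

end omegaW

lemma omegaW_zero {α : ℝ} (hα : α ≠ 0) : omegaW α 0 = 1 / Gamma (α + 1) := by
  simp [omegaW, zero_rpow hα]

section GeometricWeight

variable {a : ℕ → ℝ} {r : ℝ} (ha : ∀ n, 0 ≤ a n) (hanti : Antitone a) (hr0 : 0 ≤ r)
include ha hanti hr0

lemma antitone_mul_pow (hr1 : r ≤ 1) : Antitone fun n => a n * r ^ n :=
  antitone_nat_of_succ_le fun n =>
    mul_le_mul (hanti n.le_succ) (pow_le_pow_of_le_one hr0 hr1 n.le_succ) (by positivity) (ha n)

lemma two_mul_mul_pow_succ_le (hr1 : r ≤ 1) (hconv : ∀ n, 2 * a (n + 1) ≤ a n + a (n + 2))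
    (n : ℕ) : 2 * (a (n + 1) * r ^ (n + 1)) ≤ a n * r ^ n + a (n + 2) * r ^ (n + 2) := by
  have hdecay : 0 ≤ (1 - r) * (a n - r * a (n + 2)) :=
    mul_nonneg (by linarith) (by nlinarith [ha (n + 2), hanti (show n ≤ n + 2 by omega)])
  have hmid := mul_le_mul_of_nonneg_right (hconv n) hr0
  have key : 2 * a (n + 1) * r ≤ a n + a (n + 2) * r ^ 2 := by nlinarith
  calc 2 * (a (n + 1) * r ^ (n + 1)) = r ^ n * (2 * a (n + 1) * r) := by ring
    _ ≤ r ^ n * (a n + a (n + 2) * r ^ 2) := by gcongr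
    _ = a n * r ^ n + a (n + 2) * r ^ (n + 2) := by ring

lemma tendsto_succ_mul_mul_pow (hr1 : r < 1) :
    Tendsto (fun n : ℕ => ((n : ℝ) + 1) * (a n * r ^ n)) atTop (𝓝 0) := by
  have hgeom : Tendsto (fun n : ℕ => a 0 * ((n : ℝ) * r ^ n + r ^ n)) atTop (𝓝 0) := by
    simpa using ((tendsto_self_mul_const_pow_of_lt_one hr0 hr1).add
      (tendsto_pow_atTop_nhds_zero_of_lt_one hr0 hr1)).const_mul (a 0)
  refine squeeze_zero (fun n => by have := ha n; positivity) (fun n => ?_) hgeom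
  calc ((n : ℝ) + 1) * (a n * r ^ n) ≤ ((n : ℝ) + 1) * (a 0 * r ^ n) := by
        gcongr; exact hanti n.zero_le
    _ = a 0 * ((n : ℝ) * r ^ n + r ^ n) := by ring

end GeometricWeight

theorem stmt_19 (α : ℝ) (hα0 : 0 < α) (hα1 : α < 1) :
    ∀ ξ : ℂ, ‖ξ‖ < 1 →
      1 / (2 * Real.Gamma (α + 1))
        ≤ ‖∑' n : ℕ, ((omegaW α n : ℝ) : ℂ) * ξ ^ n‖ := by
  intro ξ hξ
  set r := ‖ξ‖
  have hr0 : 0 ≤ r := norm_nonneg ξ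
  have hω := omegaW_nonneg hα0.le
  have hanti := omegaW_antitone hα0.le hα1.le
  have hsummable : Summable fun n : ℕ => ((omegaW α n : ℝ) : ℂ) * ξ ^ n := by
    refine .of_norm_bounded ((summable_geometric_of_lt_one hr0 hξ).mul_left (omegaW α 0))
      fun n => ?_
    rw [norm_mul, norm_pow, Complex.norm_real, norm_of_nonneg (hω n)]
    exact mul_le_mul_of_nonneg_right (hanti n.zero_le) (by positivity)
  have hpolar : HasSum
      (fun n : ℕ => ((omegaW α n * r ^ n : ℝ) : ℂ) * Complex.exp (ξ.arg * Complex.I) ^ n)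
      (∑' n : ℕ, ((omegaW α n : ℝ) : ℂ) * ξ ^ n) := by
    convert hsummable.hasSum using 2 with n
    conv_rhs => rw [← Complex.norm_mul_exp_arg_mul_I ξ]
    push_cast
    ring
  have key := half_le_re_of_hasSum_mul_pow (fun n => mul_nonneg (hω n) (pow_nonneg hr0 n))
    (antitone_mul_pow hω hanti hr0 hξ.le)
    (two_mul_mul_pow_succ_le hω hanti hr0 hξ.le (two_mul_omegaW_succ_le hα0.le hα1.le))
    (tendsto_succ_mul_mul_pow hω hanti hr0 hξ) (Complex.norm_exp_ofReal_mul_I _) hpolar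
  calc 1 / (2 * Gamma (α + 1)) = omegaW α 0 * r ^ 0 / 2 := by
        rw [omegaW_zero hα0.ne']; ring
    _ ≤ _ := key
    _ ≤ _ := Complex.re_le_norm _
end
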